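/- Let γ ∈ ℂ, γ ≠ 0, define c_n = e^{−|γ|²/2}·γⁿ/√(n!), and let ψ_{n,m} = (c_n·[m=0] − [n=0]·c_m)/√(2(1 − e^{−|γ|²})) be the Fock coefficients of the normalized state |ψ⟩ = [2(1−e^{−|γ|²})]^{−1/2}(|γ⟩⊗|0⟩ − |0⟩⊗|γ⟩). Then the energy of |ψ⟩ satisfies Σ_{n,m≥0} (n+m)·|ψ_{n,m}|² = |γ|²/(1 − e^{−|γ|²}); moreover this quantity tends to 1 as γ → 0. -/

import Mathlib

/-!
The weights `‖c_n‖² = e^{-|γ|²} |γ|^{2n} / n!` form the Poisson distribution of mean `|γ|²`, and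
`ψ` lives on the two axes `m = 0` and `n = 0`, where `(n + m) ‖ψ_{n,m}‖²` is `n ‖c_n‖² / N`,
resp. `m ‖c_m‖² / N` with `N = 2(1 - e^{-|γ|²})`; the only overlap `(0, 0)` carries energy `0`.
So the energy is `2|γ|² / N`. The limit is the derivative `1` of `t ↦ 1 - e^{-t}` at `0`.
-/

/-- Fock-basis coefficients of the coherent state `|γ⟩`. -/
noncomputable def cohCoeff (γ : ℂ) (n : ℕ) : ℂ :=
  (Real.exp (-(‖γ‖) ^ 2 / 2) : ℂ) * γ ^ n / (Real.sqrt n.factorial : ℂ)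

/-- Fock-basis coefficients of the normalized state
`|ψ⟩ = [2(1 - e^{-|γ|²})]^{-1/2} (|γ⟩⊗|0⟩ - |0⟩⊗|γ⟩)`. -/
noncomputable def psiCoeff (γ : ℂ) (n m : ℕ) : ℂ :=
  (cohCoeff γ n * (if m = 0 then 1 else 0) - (if n = 0 then 1 else 0) * cohCoeff γ m) /
    (Real.sqrt (2 * (1 - Real.exp (-(‖γ‖) ^ 2))) : ℂ)

open Filter Topology Real

theorem hasSum_natCast_mul_pow_div_factorial (x : ℝ) :
    HasSum (fun n : ℕ => n * x ^ n / n.factorial) (x * exp x) := by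
  have hterm (n : ℕ) :
      ((n + 1 : ℕ) : ℝ) * x ^ (n + 1) / (n + 1).factorial = x * (x ^ n / n.factorial) := by
    rw [Nat.factorial_succ, pow_succ]
    push_cast
    field_simp
  have hexp : HasSum (fun n : ℕ => x ^ n / n.factorial) (exp x) :=
    exp_eq_exp_ℝ ▸ NormedSpace.expSeries_div_hasSum_exp x
  have hshift := hexp.mul_left x
  simp only [← hterm] at hshift
  simpa using (hasSum_nat_add_iff (f := fun n : ℕ => n * x ^ n / n.factorial) 1).mp hshift

theorem hasSum_ite_snd_eq {α β γ : Type*} [AddCommMonoid α] [TopologicalSpace α] [DecidableEq γ]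
    {f : β → α} {a : α} (c : γ) (hf : HasSum f a) :
    HasSum (fun p : β × γ => if p.2 = c then f p.1 else 0) a := by
  refine ((Prod.mk_left_injective c).hasSum_iff ?_).mp (by simpa [Function.comp_def] using hf)
  rintro ⟨b, d⟩ hp
  rw [if_neg]
  rintro rfl
  exact hp ⟨b, rfl⟩

theorem hasSum_ite_fst_eq {α β γ : Type*} [AddCommMonoid α] [TopologicalSpace α] [DecidableEq β]
    {f : γ → α} {a : α} (c : β) (hf : HasSum f a) :
    HasSum (fun p : β × γ => if p.1 = c then f p.2 else 0) a :=
  (Equiv.prodComm β γ).hasSum_iff.mpr (hasSum_ite_snd_eq c hf)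

theorem tendsto_div_one_sub_exp_neg :
    Tendsto (fun t : ℝ => t / (1 - exp (-t))) (𝓝[≠] 0) (𝓝 1) := by
  have hd : HasDerivAt (fun t => 1 - exp (-t)) 1 0 := by
    simpa using ((hasDerivAt_exp _).comp 0 (hasDerivAt_neg 0)).const_sub 1
  simpa [slope_def_field] using (hasDerivAt_iff_tendsto_slope.mp hd).inv₀ one_ne_zero

theorem tendsto_norm_sq_nhdsNE_zero {E : Type*} [NormedAddGroup E] :
    Tendsto (fun x : E => ‖x‖ ^ 2) (𝓝[≠] 0) (𝓝[≠] 0) :=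
  tendsto_nhdsWithin_iff.2
    ⟨((continuous_norm.pow 2).tendsto' 0 0 (by simp)).mono_left nhdsWithin_le_nhds,
      eventually_nhdsWithin_of_forall fun _ hx => pow_ne_zero 2 (norm_ne_zero_iff.2 hx)⟩

theorem norm_cohCoeff_sq (γ : ℂ) (n : ℕ) :
    ‖cohCoeff γ n‖ ^ 2 = exp (-‖γ‖ ^ 2) * (‖γ‖ ^ 2) ^ n / n.factorial := by
  rw [cohCoeff, norm_div, norm_mul, norm_pow, Complex.norm_real, Complex.norm_real,
    norm_of_nonneg (exp_pos _).le, norm_of_nonneg (sqrt_nonneg _), div_pow, mul_pow,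
    sq_sqrt (Nat.cast_nonneg _), ← exp_nat_mul, ← pow_mul, ← pow_mul, mul_comm n]
  norm_num [mul_div_cancel₀]

theorem hasSum_natCast_mul_norm_cohCoeff_sq (γ : ℂ) :
    HasSum (fun n : ℕ => n * ‖cohCoeff γ n‖ ^ 2) (‖γ‖ ^ 2) := by
  have h := (hasSum_natCast_mul_pow_div_factorial (‖γ‖ ^ 2)).mul_left (exp (-‖γ‖ ^ 2))
  rw [mul_left_comm, ← exp_add, neg_add_cancel, exp_zero, mul_one] at h
  simpa only [norm_cohCoeff_sq, mul_div_assoc, mul_left_comm] using h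

theorem natCast_add_mul_norm_psiCoeff_sq (γ : ℂ) (n m : ℕ) :
    ((n + m : ℕ) : ℝ) * ‖psiCoeff γ n m‖ ^ 2 =
      ((if m = 0 then n * ‖cohCoeff γ n‖ ^ 2 else 0) +
        (if n = 0 then m * ‖cohCoeff γ m‖ ^ 2 else 0)) / (2 * (1 - exp (-‖γ‖ ^ 2))) := by
  have hN : 0 ≤ 2 * (1 - exp (-‖γ‖ ^ 2)) := by
    have := exp_le_one_iff.2 (neg_nonpos.2 (sq_nonneg ‖γ‖))
    linarith
  rw [psiCoeff, norm_div, Complex.norm_real, norm_of_nonneg (sqrt_nonneg _), div_pow,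
    sq_sqrt hN, mul_div_assoc']
  congr 1
  by_cases hn : n = 0 <;> by_cases hm : m = 0 <;> simp [hn, hm]

theorem energy_antisym_coherent_general (γ : ℂ) :
    (∑' p : ℕ × ℕ, ((p.1 + p.2 : ℕ) : ℝ) * ‖psiCoeff γ p.1 p.2‖ ^ 2 =
        (‖γ‖) ^ 2 / (1 - Real.exp (-(‖γ‖) ^ 2))) ∧
    Filter.Tendsto
      (fun g : ℂ => (‖g‖) ^ 2 / (1 - Real.exp (-(‖g‖) ^ 2)))
      (nhdsWithin 0 {0}ᶜ) (nhds 1) := by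
  refine ⟨?_, tendsto_div_one_sub_exp_neg.comp tendsto_norm_sq_nhdsNE_zero⟩
  have hc := hasSum_natCast_mul_norm_cohCoeff_sq γ
  have hψ := ((hasSum_ite_snd_eq 0 hc).add (hasSum_ite_fst_eq 0 hc)).div_const
    (2 * (1 - exp (-‖γ‖ ^ 2)))
  simp_rw [natCast_add_mul_norm_psiCoeff_sq, hψ.tsum_eq, ← two_mul]
  exact mul_div_mul_left _ _ two_ne_zero

/-- The energy of `|ψ⟩ ∝ |γ⟩⊗|0⟩ - |0⟩⊗|γ⟩` equals `|γ|²/(1 - e^{-|γ|²})`, and this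
quantity tends to `1` as `γ → 0`. -/
theorem energy_antisym_coherent (γ : ℂ) (hγ : γ ≠ 0) :
    (∑' p : ℕ × ℕ, ((p.1 + p.2 : ℕ) : ℝ) * ‖psiCoeff γ p.1 p.2‖ ^ 2 =
        (‖γ‖) ^ 2 / (1 - Real.exp (-(‖γ‖) ^ 2))) ∧
    Filter.Tendsto
      (fun g : ℂ => (‖g‖) ^ 2 / (1 - Real.exp (-(‖g‖) ^ 2)))
      (nhdsWithin 0 {0}ᶜ) (nhds 1) :=
  energy_antisym_coherent_general γ
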